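/- A bipartite state ρ on ℂ^{d₁} ⊗ ℂ^{d₂} is 1-UDA if and only if at least one of its two single-system marginals ρ_{A₁} = Tr_{A₂} ρ and ρ_{A₂} = Tr_{A₁} ρ is pure (has rank one). -/

import Mathlib

/-!
If `ρ_{A₁} = ψψ*` is pure, a state `σ` with the same first marginal has no weight outside the
projection `P = ψψ* ⊗ 1`, because `tr (σ P) = tr (ρ_{A₁} ψψ*) = 1 = tr σ`. Hence
`σ = P σ P = ψψ* ⊗ σ_{A₂} = ψψ* ⊗ ρ_{A₂}`, and likewise `ρ = ψψ* ⊗ ρ_{A₂}`, so `σ = ρ`.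

If neither marginal `A = ρ_{A₁}`, `B = ρ_{A₂}` is pure, each has rank at least two, so a single
term `C` (resp. `D`) of its spectral decomposition satisfies `0 ≤ C ≤ A` without being
proportional to `A`. Then `A ⊗ B` and `A ⊗ B + (C - (tr C) A) ⊗ (D - (tr D) B)` are two
different states with marginals `A` and `B`, and at least one of them is not `ρ`.
-/

noncomputable section
open scoped Matrix ComplexOrder

/-- The first marginal `ρ_{A₁} = Tr_{A₂} ρ` of a bipartite matrix. -/
def margA {d₁ d₂ : ℕ} (ρ : Matrix (Fin d₁ × Fin d₂) (Fin d₁ × Fin d₂) ℂ) :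
    Matrix (Fin d₁) (Fin d₁) ℂ :=
  Matrix.of fun i j => ∑ k, ρ (i, k) (j, k)

/-- The second marginal `ρ_{A₂} = Tr_{A₁} ρ` of a bipartite matrix. -/
def margB {d₁ d₂ : ℕ} (ρ : Matrix (Fin d₁ × Fin d₂) (Fin d₁ × Fin d₂) ℂ) :
    Matrix (Fin d₂) (Fin d₂) ℂ :=
  Matrix.of fun k l => ∑ i, ρ (i, k) (i, l)

open Matrix
open scoped Kronecker

namespace Matrix

theorem rank_eq_zero_iff {K m n : Type*} [Field K] [Fintype n] {A : Matrix m n K} :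
    A.rank = 0 ↔ A = 0 := by
  classical
  rw [rank, Submodule.finrank_eq_zero, LinearMap.range_eq_bot, ← toLin'_apply',
    LinearEquiv.map_eq_zero_iff]

theorem kronecker_ne_zero {R l m n p : Type*} [MulZeroClass R] [NoZeroDivisors R]
    {A : Matrix l m R} {B : Matrix n p R} (hA : A ≠ 0) (hB : B ≠ 0) : A ⊗ₖ B ≠ 0 := by
  obtain ⟨i, j, hij⟩ : ∃ i j, A i j ≠ 0 := by
    by_contra! h
    exact hA (ext h)
  obtain ⟨k, l, hkl⟩ : ∃ k l, B k l ≠ 0 := by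
    by_contra! h
    exact hB (ext h)
  intro h
  simpa [hij, hkl] using congrFun (congrFun h (i, k)) (j, l)

variable {𝕜 m n : Type*} [RCLike 𝕜] [Fintype m] [Fintype n]

theorem PosSemidef.trace_conjTranspose_mul_mul_eq_zero_iff {A : Matrix n n 𝕜}
    (hA : A.PosSemidef) (M : Matrix n m 𝕜) : (Mᴴ * A * M).trace = 0 ↔ A * M = 0 := by
  classical
  open scoped MatrixOrder in
  obtain ⟨B, rfl⟩ := CStarAlgebra.nonneg_iff_eq_star_mul_self.mp hA.nonneg
  rw [star_eq_conjTranspose, conjTranspose_mul_self_mul_eq_zero, Matrix.mul_assoc,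
    Matrix.mul_assoc, ← Matrix.mul_assoc Mᴴ, ← conjTranspose_mul,
    trace_conjTranspose_mul_self_eq_zero_iff]

theorem posSemidef_kronecker_add_sub_smul_kronecker_sub_smul {A C : Matrix m m 𝕜}
    {B D : Matrix n n 𝕜} (hC : C.PosSemidef) (hAC : (A - C).PosSemidef) (hD : D.PosSemidef)
    (hBD : (B - D).PosSemidef) {s t : 𝕜} (hs₀ : 0 ≤ s) (hs₁ : s ≤ 1) (ht₀ : 0 ≤ t)
    (ht₁ : t ≤ 1) :
    (A ⊗ₖ B + (C - s • A) ⊗ₖ (D - t • B)).PosSemidef := by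
  have hsum : A ⊗ₖ B + (C - s • A) ⊗ₖ (D - t • B) =
      (1 + (1 - s) * (1 - t)) • C ⊗ₖ D + (1 - t * (1 - s)) • C ⊗ₖ (B - D) +
        (1 - s * (1 - t)) • (A - C) ⊗ₖ D + (1 + s * t) • (A - C) ⊗ₖ (B - D) := by
    ext p q
    simp only [add_apply, smul_apply, sub_apply, kroneckerMap_apply, smul_eq_mul]
    ring
  rw [hsum]
  refine ((((hC.kronecker hD).smul ?_).add ((hC.kronecker hBD).smul ?_)).add
    ((hAC.kronecker hD).smul ?_)).add ((hAC.kronecker hBD).smul ?_)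
  · exact add_nonneg zero_le_one (mul_nonneg (sub_nonneg.2 hs₁) (sub_nonneg.2 ht₁))
  · exact sub_nonneg.2 (mul_le_one₀ ht₁ (sub_nonneg.2 hs₁) (sub_le_self _ hs₀))
  · exact sub_nonneg.2 (mul_le_one₀ hs₁ (sub_nonneg.2 ht₁) (sub_le_self _ ht₀))
  · exact add_nonneg zero_le_one (mul_nonneg hs₀ ht₀)

variable [DecidableEq n] {A : Matrix n n 𝕜}

namespace IsHermitian

theorem eq_sum_eigenvalues_smul_vecMulVec (hA : A.IsHermitian) :
    A = ∑ i, hA.eigenvalues i •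
      vecMulVec ⇑(hA.eigenvectorBasis i) (star ⇑(hA.eigenvectorBasis i)) := by
  conv_lhs => rw [hA.spectral_theorem]
  ext p q
  simp only [Unitary.conjStarAlgAut_apply, mul_apply, diagonal_apply, sum_apply, smul_apply,
    vecMulVec_apply, mul_ite, mul_zero, Finset.sum_ite_eq', Finset.mem_univ, if_true,
    eigenvectorUnitary_apply, Function.comp_apply, star_apply, Pi.star_apply,
    RCLike.real_smul_eq_coe_mul]
  exact Finset.sum_congr rfl fun i _ => by ring

theorem star_eigenvectorBasis_dotProduct (hA : A.IsHermitian) (i j : n) :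
    star ⇑(hA.eigenvectorBasis i) ⬝ᵥ ⇑(hA.eigenvectorBasis j) = if i = j then 1 else 0 := by
  rw [dotProduct_comm, ← EuclideanSpace.inner_eq_star_dotProduct]
  exact orthonormal_iff_ite.1 hA.eigenvectorBasis.orthonormal i j

theorem eigenvectorBasis_ne_zero (hA : A.IsHermitian) (i : n) :
    ⇑(hA.eigenvectorBasis i) ≠ 0 :=
  fun h => by simpa [h] using hA.star_eigenvectorBasis_dotProduct i i

theorem vecMulVec_eigenvectorBasis_mulVec (hA : A.IsHermitian) (i j : n) :
    vecMulVec ⇑(hA.eigenvectorBasis i) (star ⇑(hA.eigenvectorBasis i)) *ᵥ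
      ⇑(hA.eigenvectorBasis j) = if i = j then ⇑(hA.eigenvectorBasis i) else 0 := by
  rw [vecMulVec_mulVec, hA.star_eigenvectorBasis_dotProduct]
  split_ifs <;> simp

theorem exists_eq_vecMulVec_of_rank_eq_one (hA : A.IsHermitian) (hr : A.rank = 1)
    (htr : A.trace = 1) : ∃ ψ : n → 𝕜, star ψ ⬝ᵥ ψ = 1 ∧ A = vecMulVec ψ (star ψ) := by
  rw [hA.rank_eq_card_non_zero_eigs, Fintype.card_eq_one_iff] at hr
  obtain ⟨⟨i, _⟩, hi⟩ := hr
  have hzero : ∀ j ≠ i, hA.eigenvalues j = 0 := fun j hj => by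
    by_contra h
    exact hj (congrArg Subtype.val (hi ⟨j, h⟩))
  have hone : hA.eigenvalues i = 1 := by
    rw [hA.trace_eq_sum_eigenvalues, Finset.sum_eq_single i (fun j _ hj => by simp [hzero j hj])
      (by simp)] at htr
    exact_mod_cast htr
  refine ⟨hA.eigenvectorBasis i, by simpa using hA.star_eigenvectorBasis_dotProduct i i, ?_⟩
  conv_lhs => rw [hA.eq_sum_eigenvalues_smul_vecMulVec]
  rw [Finset.sum_eq_single i (fun j _ hj => by simp [hzero j hj]) (by simp), hone, one_smul]

end IsHermitian

theorem PosSemidef.exists_posSemidef_sub_ne_smul (hA : A.PosSemidef) (hr : 1 < A.rank) :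
    ∃ C : Matrix n n 𝕜, C.PosSemidef ∧ (A - C).PosSemidef ∧ ∀ c : 𝕜, C ≠ c • A := by
  have hH := hA.isHermitian
  rw [hH.rank_eq_card_non_zero_eigs, Fintype.one_lt_card_iff] at hr
  obtain ⟨⟨i, hi⟩, ⟨j, hj⟩, hij⟩ := hr
  have hij : i ≠ j := fun h => hij (Subtype.ext h)
  have hpsd : ∀ k, (hH.eigenvalues k • vecMulVec ⇑(hH.eigenvectorBasis k)
      (star ⇑(hH.eigenvectorBasis k))).PosSemidef := fun k =>
    (posSemidef_vecMulVec_self_star _).smul (hA.eigenvalues_nonneg k)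
  refine ⟨_, hpsd i, ?_, fun c hc => ?_⟩
  · convert posSemidef_sum (Finset.univ.erase i) fun k _ => hpsd k using 1
    rw [sub_eq_iff_eq_add', Finset.add_sum_erase _
      (fun k => hH.eigenvalues k • vecMulVec ⇑(hH.eigenvectorBasis k)
        (star ⇑(hH.eigenvectorBasis k))) (Finset.mem_univ i)]
    exact hH.eq_sum_eigenvalues_smul_vecMulVec
  · -- on the `j`-th eigenvector `C = c • A` forces `c = 0`, then on the `i`-th `λᵢ = 0`
    have hcj := congrArg (· *ᵥ ⇑(hH.eigenvectorBasis j)) hc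
    simp only [smul_mulVec, hH.vecMulVec_eigenvectorBasis_mulVec, if_neg hij, smul_zero,
      hH.mulVec_eigenvectorBasis] at hcj
    have hc0 : c = 0 := by simpa [hj, hH.eigenvectorBasis_ne_zero] using hcj.symm
    have hci := congrArg (· *ᵥ ⇑(hH.eigenvectorBasis i)) hc
    simp [smul_mulVec, hH.vecMulVec_eigenvectorBasis_mulVec, hc0, hi,
      hH.eigenvectorBasis_ne_zero] at hci

end Matrix

section Bipartite

variable {d₁ d₂ : ℕ}

theorem margA_add (σ τ : Matrix (Fin d₁ × Fin d₂) (Fin d₁ × Fin d₂) ℂ) :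
    margA (σ + τ) = margA σ + margA τ := by
  ext i j
  simp [margA, Finset.sum_add_distrib]

theorem margB_add (σ τ : Matrix (Fin d₁ × Fin d₂) (Fin d₁ × Fin d₂) ℂ) :
    margB (σ + τ) = margB σ + margB τ := by
  ext k l
  simp [margB, Finset.sum_add_distrib]

theorem margA_kronecker (A : Matrix (Fin d₁) (Fin d₁) ℂ) (B : Matrix (Fin d₂) (Fin d₂) ℂ) :
    margA (A ⊗ₖ B) = B.trace • A := by
  ext i j
  simp [margA, trace, Finset.mul_sum, mul_comm]

theorem margB_kronecker (A : Matrix (Fin d₁) (Fin d₁) ℂ) (B : Matrix (Fin d₂) (Fin d₂) ℂ) :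
    margB (A ⊗ₖ B) = A.trace • B := by
  ext k l
  simp [margB, trace, Finset.sum_mul]

theorem margA_submatrix_swap (σ : Matrix (Fin d₁ × Fin d₂) (Fin d₁ × Fin d₂) ℂ) :
    margA (σ.submatrix Prod.swap Prod.swap) = margB σ := rfl

theorem margB_submatrix_swap (σ : Matrix (Fin d₁ × Fin d₂) (Fin d₁ × Fin d₂) ℂ) :
    margB (σ.submatrix Prod.swap Prod.swap) = margA σ := rfl

theorem margA_eq_sum_submatrix (σ : Matrix (Fin d₁ × Fin d₂) (Fin d₁ × Fin d₂) ℂ) :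
    margA σ = ∑ k, σ.submatrix (·, k) (·, k) := by
  ext i j
  simp [margA, Matrix.sum_apply]

theorem margA_posSemidef {σ : Matrix (Fin d₁ × Fin d₂) (Fin d₁ × Fin d₂) ℂ}
    (hσ : σ.PosSemidef) : (margA σ).PosSemidef := by
  rw [margA_eq_sum_submatrix]
  exact posSemidef_sum _ fun k _ => hσ.submatrix _

theorem margB_posSemidef {σ : Matrix (Fin d₁ × Fin d₂) (Fin d₁ × Fin d₂) ℂ}
    (hσ : σ.PosSemidef) : (margB σ).PosSemidef := by
  simpa only [margA_submatrix_swap] using margA_posSemidef (hσ.submatrix Prod.swap)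

theorem trace_margA (σ : Matrix (Fin d₁ × Fin d₂) (Fin d₁ × Fin d₂) ℂ) :
    (margA σ).trace = σ.trace := by
  simp [trace, margA, Fintype.sum_prod_type]

theorem trace_margB (σ : Matrix (Fin d₁ × Fin d₂) (Fin d₁ × Fin d₂) ℂ) :
    (margB σ).trace = σ.trace := by
  simp [trace, margB, Fintype.sum_prod_type, Finset.sum_comm (γ := Fin d₁)]

theorem trace_mul_kronecker_one (σ : Matrix (Fin d₁ × Fin d₂) (Fin d₁ × Fin d₂) ℂ)
    (X : Matrix (Fin d₁) (Fin d₁) ℂ) :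
    (σ * (X ⊗ₖ (1 : Matrix (Fin d₂) (Fin d₂) ℂ))).trace = (margA σ * X).trace := by
  simp only [trace, diag_apply, mul_apply, kroneckerMap_apply, one_apply, mul_ite, mul_one,
    mul_zero, Fintype.sum_prod_type, Finset.sum_ite_eq', Finset.mem_univ, if_true, margA, of_apply,
    Finset.sum_mul]
  exact Finset.sum_congr rfl fun _ _ => Finset.sum_comm

theorem vecMulVec_kronecker_one_mul_mul (σ : Matrix (Fin d₁ × Fin d₂) (Fin d₁ × Fin d₂) ℂ)
    (ψ : Fin d₁ → ℂ) :
    (vecMulVec ψ (star ψ) ⊗ₖ (1 : Matrix (Fin d₂) (Fin d₂) ℂ)) * σ *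
        (vecMulVec ψ (star ψ) ⊗ₖ (1 : Matrix (Fin d₂) (Fin d₂) ℂ)) =
      vecMulVec ψ (star ψ) ⊗ₖ of fun k l => ∑ i, ∑ j, star (ψ i) * σ (i, k) (j, l) * ψ j := by
  ext ⟨i, k⟩ ⟨j, l⟩
  simp only [mul_apply, kroneckerMap_apply, vecMulVec_apply, Pi.star_apply, one_apply, mul_ite,
    mul_one, mul_zero, ite_mul, zero_mul, Fintype.sum_prod_type, Finset.sum_ite_eq,
    Finset.sum_ite_eq', Finset.mem_univ, if_true, of_apply, Finset.sum_mul, Finset.mul_sum]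
  rw [Finset.sum_comm]
  exact Finset.sum_congr rfl fun _ _ => Finset.sum_congr rfl fun _ _ => by ring

theorem eq_vecMulVec_kronecker_margB {σ : Matrix (Fin d₁ × Fin d₂) (Fin d₁ × Fin d₂) ℂ}
    (hσ : σ.PosSemidef) {ψ : Fin d₁ → ℂ} (hψ : star ψ ⬝ᵥ ψ = 1)
    (h : margA σ = vecMulVec ψ (star ψ)) :
    σ = vecMulVec ψ (star ψ) ⊗ₖ margB σ := by
  set E := vecMulVec ψ (star ψ) with hE
  set P := E ⊗ₖ (1 : Matrix (Fin d₂) (Fin d₂) ℂ) with hP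
  have hEE : E * E = E := by rw [hE, vecMulVec_mul_vecMulVec, hψ, one_smul]
  have htrE : E.trace = 1 := by rw [hE, trace_vecMulVec, dotProduct_comm, hψ]
  have hPP : P * P = P := by rw [hP, ← mul_kronecker_mul, hEE, Matrix.one_mul]
  have hPH : Pᴴ = P := by
    rw [hP, conjTranspose_kronecker, hE, conjTranspose_vecMulVec, star_star, conjTranspose_one]
  -- `tr ((1 - P) σ (1 - P)) = tr σ - tr (σ_{A₁} E) = tr E - tr (E E) = 0`
  have hσP : σ * (1 - P) = 0 := by
    rw [← hσ.trace_conjTranspose_mul_mul_eq_zero_iff, trace_mul_cycle, conjTranspose_sub,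
      conjTranspose_one, hPH, (IsIdempotentElem.one_sub hPP).eq, trace_mul_comm, Matrix.mul_sub,
      Matrix.mul_one, trace_sub, trace_mul_kronecker_one, ← trace_margA, h, hEE, sub_self]
  have hσP' : σ * P = σ := by rwa [Matrix.mul_sub, Matrix.mul_one, sub_eq_zero, eq_comm] at hσP
  have hPσ : P * σ = σ := by
    simpa only [conjTranspose_mul, hPH, hσ.isHermitian.eq] using congrArg conjTranspose hσP'
  obtain ⟨T, hT⟩ : ∃ T, σ = E ⊗ₖ T :=
    ⟨_, by rw [← vecMulVec_kronecker_one_mul_mul σ ψ, ← hP, Matrix.mul_assoc, hσP', hPσ]⟩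
  conv_rhs => rw [hT, margB_kronecker, htrE, one_smul]
  exact hT

theorem eq_of_rank_margA_eq_one {ρ σ : Matrix (Fin d₁ × Fin d₂) (Fin d₁ × Fin d₂) ℂ}
    (hρ : ρ.PosSemidef) (htr : (margA ρ).trace = 1) (hr : (margA ρ).rank = 1)
    (hσ : σ.PosSemidef) (hA : margA σ = margA ρ) (hB : margB σ = margB ρ) : σ = ρ := by
  obtain ⟨ψ, hψ, hE⟩ :=
    (margA_posSemidef hρ).isHermitian.exists_eq_vecMulVec_of_rank_eq_one hr htr
  rw [eq_vecMulVec_kronecker_margB hσ hψ (hA.trans hE), hB,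
    ← eq_vecMulVec_kronecker_margB hρ hψ hE]

theorem eq_of_rank_margB_eq_one {ρ σ : Matrix (Fin d₁ × Fin d₂) (Fin d₁ × Fin d₂) ℂ}
    (hρ : ρ.PosSemidef) (htr : (margB ρ).trace = 1) (hr : (margB ρ).rank = 1)
    (hσ : σ.PosSemidef) (hA : margA σ = margA ρ) (hB : margB σ = margB ρ) : σ = ρ := by
  have hswap := eq_of_rank_margA_eq_one (hρ.submatrix Prod.swap)
    (by rwa [margA_submatrix_swap]) (by rwa [margA_submatrix_swap]) (hσ.submatrix Prod.swap)
    (by simpa only [margA_submatrix_swap]) (by simpa only [margB_submatrix_swap])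
  simpa using congrArg (submatrix · Prod.swap Prod.swap) hswap

theorem exists_posSemidef_kronecker_add_of_one_lt_rank {A : Matrix (Fin d₁) (Fin d₁) ℂ}
    {B : Matrix (Fin d₂) (Fin d₂) ℂ} (hA : A.PosSemidef) (hAtr : A.trace = 1)
    (hAr : 1 < A.rank) (hB : B.PosSemidef) (hBtr : B.trace = 1) (hBr : 1 < B.rank) :
    ∃ X, X ≠ 0 ∧ margA X = 0 ∧ margB X = 0 ∧ (A ⊗ₖ B + X).PosSemidef := by
  obtain ⟨C, hC, hAC, hCA⟩ := hA.exists_posSemidef_sub_ne_smul hAr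
  obtain ⟨D, hD, hBD, hDB⟩ := hB.exists_posSemidef_sub_ne_smul hBr
  have hC₁ : C.trace ≤ 1 := by simpa [trace_sub, hAtr, sub_nonneg] using hAC.trace_nonneg
  have hD₁ : D.trace ≤ 1 := by simpa [trace_sub, hBtr, sub_nonneg] using hBD.trace_nonneg
  refine ⟨(C - C.trace • A) ⊗ₖ (D - D.trace • B),
    kronecker_ne_zero (sub_ne_zero.2 (hCA _)) (sub_ne_zero.2 (hDB _)), ?_, ?_,
    posSemidef_kronecker_add_sub_smul_kronecker_sub_smul hC hAC hD hBD hC.trace_nonneg hC₁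
      hD.trace_nonneg hD₁⟩
  · rw [margA_kronecker, trace_sub, trace_smul, hBtr, smul_eq_mul, mul_one, sub_self, zero_smul]
  · rw [margB_kronecker, trace_sub, trace_smul, hAtr, smul_eq_mul, mul_one, sub_self, zero_smul]

theorem exists_ne_of_rank_margA_ne_one_of_rank_margB_ne_one
    {ρ : Matrix (Fin d₁ × Fin d₂) (Fin d₁ × Fin d₂) ℂ} (hρ : ρ.PosSemidef) (htr : ρ.trace = 1)
    (hAr : (margA ρ).rank ≠ 1) (hBr : (margB ρ).rank ≠ 1) :
    ∃ σ : Matrix (Fin d₁ × Fin d₂) (Fin d₁ × Fin d₂) ℂ,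
      σ.PosSemidef ∧ σ.trace = 1 ∧ margA σ = margA ρ ∧ margB σ = margB ρ ∧ σ ≠ ρ := by
  have hAtr : (margA ρ).trace = 1 := (trace_margA ρ).trans htr
  have hBtr : (margB ρ).trace = 1 := (trace_margB ρ).trans htr
  have one_lt_rank {m : ℕ} {M : Matrix (Fin m) (Fin m) ℂ} (h : M.trace = 1) (hr : M.rank ≠ 1) :
      1 < M.rank :=
    Nat.one_lt_iff_ne_zero_and_ne_one.2 ⟨fun h0 => by simp [rank_eq_zero_iff.1 h0] at h, hr⟩
  obtain ⟨X, hX, hXA, hXB, hpsd⟩ := exists_posSemidef_kronecker_add_of_one_lt_rank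
    (margA_posSemidef hρ) hAtr (one_lt_rank hAtr hAr) (margB_posSemidef hρ) hBtr
    (one_lt_rank hBtr hBr)
  have hprodA : margA (margA ρ ⊗ₖ margB ρ) = margA ρ := by rw [margA_kronecker, hBtr, one_smul]
  have hprodB : margB (margA ρ ⊗ₖ margB ρ) = margB ρ := by rw [margB_kronecker, hAtr, one_smul]
  by_cases hprod : margA ρ ⊗ₖ margB ρ = ρ
  · refine ⟨_, hpsd, ?_, by rw [margA_add, hXA, add_zero, hprodA],
      by rw [margB_add, hXB, add_zero, hprodB], fun h => hX (add_eq_left.mp (h.trans hprod.symm))⟩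
    rw [← trace_margA, margA_add, hXA, add_zero, hprodA, hAtr]
  · exact ⟨_, (margA_posSemidef hρ).kronecker (margB_posSemidef hρ),
      by rw [trace_kronecker, hAtr, hBtr, one_mul], hprodA, hprodB, hprod⟩

end Bipartite

/-- A bipartite state is 1-UDA (uniquely determined among all states by its two
single-system marginals) if and only if at least one of its marginals is pure. -/
theorem bipartite_oneUDA_iff_pure_marginal {d₁ d₂ : ℕ}
    (ρ : Matrix (Fin d₁ × Fin d₂) (Fin d₁ × Fin d₂) ℂ)
    (hpsd : ρ.PosSemidef) (htr : ρ.trace = 1) :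
    (∀ σ : Matrix (Fin d₁ × Fin d₂) (Fin d₁ × Fin d₂) ℂ,
        σ.PosSemidef → σ.trace = 1 → margA σ = margA ρ → margB σ = margB ρ → σ = ρ) ↔
      ((margA ρ).rank = 1 ∨ (margB ρ).rank = 1) := by
  refine ⟨fun huda => ?_, ?_⟩
  · by_contra! hr
    obtain ⟨σ, hσ, hσtr, hA, hB, hne⟩ :=
      exists_ne_of_rank_margA_ne_one_of_rank_margB_ne_one hpsd htr hr.1 hr.2
    exact hne (huda σ hσ hσtr hA hB)
  · rintro (hr | hr) σ hσ - hA hB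
    · exact eq_of_rank_margA_eq_one hpsd ((trace_margA ρ).trans htr) hr hσ hA hB
    · exact eq_of_rank_margB_eq_one hpsd ((trace_margB ρ).trans htr) hr hσ hA hB
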